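/- Let 0 < ε < 1. For all positive reals x, y, z and all (x', y', z') ∈ B_ε(x, y, z), one has |E(x, y, z) − E(x', y', z')| ≤ 20·ε·max{x, y, z}. -/

import Mathlib

open Real

/-- The piecewise linear function `E` on the positive octant. -/
noncomputable def E (x y z : ℝ) : ℝ :=
  if x + y ≤ z then z - x - y
  else if |x - y| ≤ z then (z - x - y) / 2
  else -min x y

/-- `(x',y',z') ∈ B_ε(x,y,z)`: each ratio is within a factor `1 + ε`. -/
def memB (ε x y z x' y' z' : ℝ) : Prop :=
  (1 / (1 + ε) < x / x' ∧ x / x' < 1 + ε) ∧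
  (1 / (1 + ε) < y / y' ∧ y / y' < 1 + ε) ∧
  (1 / (1 + ε) < z / z' ∧ z / z' < 1 + ε)

/-!
`E` is the maximum of the three affine functions `z - x - y`, `(z - x - y) / 2` and `-min x y`
on the positive octant, each `1`-Lipschitz for the `ℓ¹` distance, so
`|E x y z - E x' y' z'| ≤ |x - x'| + |y - y'| + |z - z'|`. A ratio `a / a'` within a factor
`1 + ε` of `1` gives `|a - a'| ≤ ε a`, hence the bound `3 ε max {x, y, z}`.
-/

lemma E_eq_max {x y : ℝ} (hx : 0 ≤ x) (hy : 0 ≤ y) (z : ℝ) :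
    E x y z = max (z - x - y) (max ((z - x - y) / 2) (-min x y)) := by
  unfold E
  rcases le_total x y with hxy | hxy
  · rw [min_eq_left hxy, abs_of_nonpos (by linarith)]
    split_ifs <;> simp only [max_def] <;> split_ifs <;> linarith
  · rw [min_eq_right hxy, abs_of_nonneg (by linarith)]
    split_ifs <;> simp only [max_def] <;> split_ifs <;> linarith

lemma abs_E_sub_E_le {x y x' y' : ℝ} (hx : 0 ≤ x) (hy : 0 ≤ y)
    (hx' : 0 ≤ x') (hy' : 0 ≤ y') (z z' : ℝ) :
    |E x y z - E x' y' z'| ≤ |x - x'| + |y - y'| + |z - z'| := by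
  rw [E_eq_max hx hy, E_eq_max hx' hy']
  have dx := abs_le.1 (le_refl |x - x'|)
  have dy := abs_le.1 (le_refl |y - y'|)
  have dz := abs_le.1 (le_refl |z - z'|)
  refine (abs_max_sub_max_le_max _ _ _ _).trans <| max_le ?_ <|
    (abs_max_sub_max_le_max _ _ _ _).trans <| max_le ?_ ?_
  · exact abs_le.2 ⟨by linarith, by linarith⟩
  · exact abs_le.2 ⟨by linarith, by linarith⟩
  · rw [neg_sub_neg, abs_sub_comm]
    refine (abs_min_sub_min_le_max _ _ _ _).trans (max_le ?_ ?_) <;>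
      linarith [abs_nonneg (x - x'), abs_nonneg (y - y'), abs_nonneg (z - z')]

lemma abs_sub_le_mul_of_lt_div_of_div_lt {ε a a' : ℝ} (ha : 0 < a) (ha' : 0 < a')
    (h₁ : 1 / (1 + ε) < a / a') (h₂ : a / a' < 1 + ε) : |a - a'| ≤ ε * a := by
  have hε : 0 < 1 + ε := (div_pos ha ha').trans h₂
  have hu : a < (1 + ε) * a' := (div_lt_iff₀ ha').1 h₂
  have hl : a' < a * (1 + ε) := by rwa [div_lt_div_iff₀ hε ha', one_mul] at h₁
  rw [abs_sub_le_iff]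
  constructor <;> nlinarith [mul_nonneg ha.le (sq_nonneg ε)]

lemma sum_abs_sub_le_of_memB {ε x y z x' y' z' : ℝ} (hx : 0 < x) (hy : 0 < y) (hz : 0 < z)
    (hx' : 0 < x') (hy' : 0 < y') (hz' : 0 < z') (hB : memB ε x y z x' y' z') :
    |x - x'| + |y - y'| + |z - z'| ≤ ε * (x + y + z) := by
  obtain ⟨⟨hx₁, hx₂⟩, ⟨hy₁, hy₂⟩, ⟨hz₁, hz₂⟩⟩ := hB
  have dx := abs_sub_le_mul_of_lt_div_of_div_lt hx hx' hx₁ hx₂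
  have dy := abs_sub_le_mul_of_lt_div_of_div_lt hy hy' hy₁ hy₂
  have dz := abs_sub_le_mul_of_lt_div_of_div_lt hz hz' hz₁ hz₂
  linarith

theorem stmt_7 (ε : ℝ) :
    ∀ x y z x' y' z' : ℝ,
      0 < x → 0 < y → 0 < z → 0 < x' → 0 < y' → 0 < z' →
      memB ε x y z x' y' z' →
      |E x y z - E x' y' z'| ≤ 20 * ε * max (max x y) z := by
  intro x y z x' y' z' hx hy hz hx' hy' hz' hB
  have hsum := sum_abs_sub_le_of_memB hx hy hz hx' hy' hz' hB
  -- membership in `B_ε` already forces `0 ≤ ε`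
  have hε : 0 ≤ ε := nonneg_of_mul_nonneg_left (hsum.trans' (by positivity)) (by positivity)
  have hM : x + y + z ≤ 3 * max (max x y) z := by
    linarith [le_max_left x y, le_max_right x y, le_max_left (max x y) z, le_max_right (max x y) z]
  calc |E x y z - E x' y' z'| ≤ |x - x'| + |y - y'| + |z - z'| :=
        abs_E_sub_E_le hx.le hy.le hx'.le hy'.le z z'
    _ ≤ ε * (x + y + z) := hsum
    _ ≤ ε * (3 * max (max x y) z) := by gcongr
    _ ≤ 20 * ε * max (max x y) z := by nlinarith [hx.trans_le (le_max_left x y)]
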